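/- On ℝ², the function Ŷ = −Y₁ + Y₂ − Y₃, where Y_i are the components of the triple junction map, coincides with the function given in polar coordinates by r^{3/2} cos(3θ/2) for θ ∈ (−π, π]. -/

import Mathlib

open Real Complex

/-- The `i`-th component of the triple junction map on `ℝ² ≃ ℂ`:
`Y_i(r,θ) = r^{3/2}|cos(3θ/2)|` for `π - 2π i / 3 ≤ θ ≤ π - 2π(i-1)/3`
(indexing `i = 1, 2, 3` via `i : Fin 3` as `i+1`), `0` elsewhere. -/
noncomputable def Ytj (i : Fin 3) (z : ℂ) : ℝ :=
  if π - 2 * π * ((i : ℕ) + 1) / 3 ≤ z.arg ∧ z.arg ≤ π - 2 * π * (i : ℕ) / 3 then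
    ‖z‖ ^ ((3:ℝ) / 2) * |Real.cos (3 / 2 * z.arg)|
  else 0

/-- on `ℝ²`, the function `Ŷ = -Y₁ + Y₂ - Y₃` coincides with the function
given in polar coordinates (`θ = arg z ∈ (-π, π]`) by `r^{3/2} cos(3θ/2)`. -/
theorem stmt7 (z : ℂ) :
    -Ytj 0 z + Ytj 1 z - Ytj 2 z
      = ‖z‖ ^ ((3:ℝ) / 2) * Real.cos (3 / 2 * z.arg) := by
  have hπ : (0:ℝ) < π := Real.pi_pos
  have hlo : -π < z.arg := Complex.neg_pi_lt_arg z
  have hhi : z.arg ≤ π := Complex.arg_le_pi z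
  set θ := z.arg with hθ
  set r := ‖z‖ ^ ((3:ℝ)/2) with hrdef
  have e0a : π - 2 * π * (((0 : Fin 3) : ℕ) + 1) / 3 = π / 3 := by norm_num; ring
  have e0b : π - 2 * π * (((0 : Fin 3) : ℕ) : ℝ) / 3 = π := by norm_num
  have e1a : π - 2 * π * (((1 : Fin 3) : ℕ) + 1) / 3 = -(π / 3) := by norm_num; ring
  have e1b : π - 2 * π * (((1 : Fin 3) : ℕ) : ℝ) / 3 = π / 3 := by norm_num; ring
  have e2a : π - 2 * π * (((2 : Fin 3) : ℕ) + 1) / 3 = -π := by norm_num; ring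
  have e2b : π - 2 * π * (((2 : Fin 3) : ℕ) : ℝ) / 3 = -(π / 3) := by norm_num; ring
  unfold Ytj
  rw [← hθ, ← hrdef, e0a, e0b, e1a, e1b, e2a, e2b]
  by_cases h1 : θ ≤ -(π / 3)
  · have hA0 : ¬ (π / 3 ≤ θ ∧ θ ≤ π) := by
      rintro ⟨h, -⟩; nlinarith
    rcases eq_or_lt_of_le h1 with heq | hlt
    · have hc : Real.cos (3 / 2 * θ) = 0 := by
        rw [heq]; rw [show (3:ℝ)/2 * -(π/3) = -(π/2) by ring, Real.cos_neg,
          Real.cos_pi_div_two]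
      rw [if_neg hA0]
      rw [if_pos ⟨le_of_eq heq.symm, by nlinarith⟩, if_pos ⟨by linarith, le_of_eq heq⟩]
      rw [hc]; simp
    · have hA1 : ¬ (-(π / 3) ≤ θ ∧ θ ≤ π / 3) := by
        rintro ⟨h, -⟩; linarith
      have hcle : Real.cos (3 / 2 * θ) ≤ 0 := by
        rw [show (3:ℝ)/2 * θ = -(-(3/2*θ)) by ring, Real.cos_neg]
        apply Real.cos_nonpos_of_pi_div_two_le_of_le <;> nlinarith
      rw [if_neg hA0, if_neg hA1, if_pos ⟨le_of_lt hlo, h1⟩]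
      rw [_root_.abs_of_nonpos hcle]; ring
  · push_neg at h1
    by_cases h2 : θ < π / 3
    · have hA0 : ¬ (π / 3 ≤ θ ∧ θ ≤ π) := by rintro ⟨h, -⟩; linarith
      have hA2 : ¬ (-π ≤ θ ∧ θ ≤ -(π / 3)) := by rintro ⟨-, h⟩; linarith
      have hcge : 0 ≤ Real.cos (3 / 2 * θ) := by
        apply Real.cos_nonneg_of_mem_Icc
        constructor <;> [nlinarith; nlinarith]
      rw [if_neg hA0, if_neg hA2, if_pos ⟨le_of_lt h1, le_of_lt h2⟩]
      rw [_root_.abs_of_nonneg hcge]; ring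
    · push_neg at h2
      have hA2 : ¬ (-π ≤ θ ∧ θ ≤ -(π / 3)) := by rintro ⟨-, h⟩; nlinarith
      have hcle : Real.cos (3 / 2 * θ) ≤ 0 := by
        apply Real.cos_nonpos_of_pi_div_two_le_of_le <;> nlinarith
      rw [if_neg hA2, if_pos ⟨h2, hhi⟩]
      rcases eq_or_lt_of_le h2 with heq | hlt
      · have hc : Real.cos (3 / 2 * θ) = 0 := by
          rw [← heq, show (3:ℝ)/2 * (π/3) = π/2 by ring, Real.cos_pi_div_two]
        rw [if_pos ⟨by linarith, le_of_eq heq.symm⟩, hc]; simp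
      · have hA1 : ¬ (-(π / 3) ≤ θ ∧ θ ≤ π / 3) := by rintro ⟨-, h⟩; linarith
        rw [if_neg hA1, _root_.abs_of_nonpos hcle]; ring
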